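/- arXiv:2507.02281 — 3 statements merged into one kernel-verified Lean document; each statement's English description precedes it below -/
import Mathlib

section
/- Let k be an odd positive integer. For every vector w : Fin (2k) → ZMod 2 there exist vectors u, v : Fin (2k) → ZMod 2 such that: (i) u + v = w; (ii) either u = 0 or the Hamming weight of u equals k − 1; (iii) either v = 0 or the Hamming weight of v equals k or k + 1; and (iv) if w ≠ 0 then u and v are not both zero (at most one of u and v is zero). -/
/-!
Identify a vector over `ZMod 2` with its support, so that addition becomes symmetric difference
and `#(W ∆ S) = #W + #S - 2 #(W ∩ S)`. For `w ≠ 0` of weight `m ≤ 2k`, take `u` supported on a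
set `S` of size `k - 1` that meets the support of `w` in `(m - 1) / 2` coordinates; then
`v = w + u` has weight `m + (k - 1) - 2 ((m - 1) / 2)`, which is `k` or `k + 1` according to the
parity of `m`.
-/

open Finset

theorem Finset.card_symmDiff_add_two_mul_card_inter {α : Type*} [DecidableEq α] (s t : Finset α) :
    #(symmDiff s t) + 2 * #(s ∩ t) = #s + #t := by
  rw [symmDiff_eq_sup_sdiff_inf, sup_eq_union, inf_eq_inter,
    card_sdiff_of_subset inter_subset_union, ← card_union_add_card_inter]
  have := card_le_card (inter_subset_union (s := s) (t := t))
  omega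

theorem Finset.exists_card_eq_card_inter_eq {α : Type*} [Fintype α] [DecidableEq α]
    (W : Finset α) {r t : ℕ} (htW : t ≤ #W) (htr : t ≤ r) (hr : r - t ≤ #Wᶜ) :
    ∃ S : Finset α, #S = r ∧ #(W ∩ S) = t := by
  obtain ⟨A, hAW, hA⟩ := exists_subset_card_eq htW
  obtain ⟨B, hBW, hB⟩ := exists_subset_card_eq hr
  have hWB : Disjoint W B := disjoint_of_subset_right hBW disjoint_compl_right
  refine ⟨A ∪ B, ?_, ?_⟩
  · rw [card_union_of_disjoint (disjoint_of_subset_left hAW hWB)]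
    omega
  · rw [inter_union_distrib_left, inter_eq_right.mpr hAW, disjoint_iff_inter_eq_empty.mp hWB,
      union_empty, hA]

section ZModTwo

variable {ι : Type*} [Fintype ι] [DecidableEq ι]

theorem ZMod.two_add_ne_zero_iff (a b : ZMod 2) : a + b ≠ 0 ↔ ¬(a ≠ 0 ↔ b ≠ 0) := by
  decide +revert

theorem hammingNorm_add_eq_card_symmDiff (x y : ι → ZMod 2) :
    hammingNorm (x + y) = #(symmDiff ({i | x i ≠ 0} : Finset ι) ({i | y i ≠ 0} : Finset ι)) := by
  unfold hammingNorm
  congr 1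
  ext i
  simp only [mem_filter, mem_univ, true_and, mem_symmDiff, Pi.add_apply,
    ZMod.two_add_ne_zero_iff]
  tauto

theorem exists_hammingNorm_eq_hammingNorm_add_eq (w : ι → ZMod 2) {r t : ℕ}
    (htw : t ≤ hammingNorm w) (htr : t ≤ r) (hr : r - t ≤ Fintype.card ι - hammingNorm w) :
    ∃ u : ι → ZMod 2, hammingNorm u = r ∧ hammingNorm (w + u) + 2 * t = hammingNorm w + r := by
  set W : Finset ι := {i | w i ≠ 0}
  obtain ⟨S, hS, hWS⟩ := W.exists_card_eq_card_inter_eq htw htr (by rwa [card_compl])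
  have hsupp : ({i | (if i ∈ S then 1 else 0 : ZMod 2) ≠ 0} : Finset ι) = S := by
    ext i; by_cases hi : i ∈ S <;> simp [hi]
  refine ⟨fun i => if i ∈ S then 1 else 0, ?_, ?_⟩
  · rw [hammingNorm, hsupp, hS]
  · rw [hammingNorm_add_eq_card_symmDiff, hsupp, ← hWS, card_symmDiff_add_two_mul_card_inter, hS]
    rfl

end ZModTwo

theorem decompose_exists_general (k : ℕ)
    (w : Fin (2 * k) → ZMod 2) :
    ∃ u v : Fin (2 * k) → ZMod 2,
      u + v = w ∧
      (u = 0 ∨ hammingNorm u = k - 1) ∧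
      (v = 0 ∨ hammingNorm v = k ∨ hammingNorm v = k + 1) ∧
      (w ≠ 0 → ¬(u = 0 ∧ v = 0)) := by
  rcases eq_or_ne w 0 with rfl | hw
  · exact ⟨0, 0, add_zero 0, Or.inl rfl, Or.inl rfl, fun h => absurd rfl h⟩
  have hm : 0 < hammingNorm w := hammingNorm_pos_iff.mpr hw
  have hmk : hammingNorm w ≤ 2 * k := by simpa using hammingNorm_le_card_fintype (x := w)
  obtain ⟨u, hu, hv⟩ := exists_hammingNorm_eq_hammingNorm_add_eq w (r := k - 1)
    (t := (hammingNorm w - 1) / 2) (by omega) (by omega) (by simp only [Fintype.card_fin]; omega)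
  refine ⟨u, w + u, ?_, Or.inr hu, Or.inr ?_, fun _ ⟨_, hv0⟩ => ?_⟩
  · exact funext fun i => by
      rw [Pi.add_apply, Pi.add_apply, add_left_comm, CharTwo.add_self_eq_zero, add_zero]
  · rcases Nat.even_or_odd (hammingNorm w) with ⟨c, hc⟩ | ⟨c, hc⟩ <;> omega
  · rw [hv0, hammingNorm_zero] at hv
    omega

/-- Correctness guarantee of the `Decompose` algorithm: any `w ∈ F₂^{2k}` (for odd
`k > 0`) splits as `w = u + v` with `u ∈ 𝒳 = {x : wt x = k-1} ∪ {0}` and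
`v ∈ 𝒴 ∪ 𝒵 = {y : wt y = k} ∪ {z : wt z = k+1} ∪ {0}`, and if `w ≠ 0` then
at most one of `u`, `v` is zero. -/
theorem decompose_exists (k : ℕ) (hk0 : 0 < k) (hk : Odd k)
    (w : Fin (2 * k) → ZMod 2) :
    ∃ u v : Fin (2 * k) → ZMod 2,
      u + v = w ∧
      (u = 0 ∨ hammingNorm u = k - 1) ∧
      (v = 0 ∨ hammingNorm v = k ∨ hammingNorm v = k + 1) ∧
      (w ≠ 0 → ¬(u = 0 ∧ v = 0)) :=
  decompose_exists_general k w
end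

section
/- Let q ≥ 2 and h, N, k, ℓ, n be positive integers, and let V ≥ 0 be a real number. Let A : Matrix (Fin h) (Fin N) (ZMod q), let α : Fin k → (Fin h → ZMod q), let τ : Fin k → ℕ, and let u, v, m : Fin k → ℤ satisfy u j + v j = m j for every j. Suppose e_u, e_v : Fin N → ℤ satisfy ‖e_u‖ ≤ V·√(ℓ·n), ‖e_v‖ ≤ V·√(ℓ·n), A·e_u = Σ_{j=1}^{k} (−1)^{τ j} · (u j) · α j, and A·e_v = Σ_{j=1}^{k} (−1)^{τ j} · (v j) · α j (equalities in (ZMod q)^h, with integer scalars cast into ZMod q). Then the signature e := e_u + e_v satisfies both verification conditions: ‖e‖ ≤ 2kV·√(2kℓn) and A·e = Σ_{j=1}^{k} (−1)^{τ j} · (m j) · α j. -/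
/-!
The verification equation holds because `e ↦ A·e` and the syndrome `m ↦ Σ_j (-1)^{τ_j} m_j α_j`
are both additive, and `m = u + v`. For the norm, the triangle inequality gives
`‖e‖ ≤ 2c` with `c = V√(ℓn) ≥ 0` (a bound on a norm), and the verification bound is
`k√(2k) · 2c ≥ 2c` since `k ≥ 1`.
-/

noncomputable def intEucNorm {N : ℕ} (e : Fin N → ℤ) : ℝ :=
  Real.sqrt (∑ i, ((e i : ℝ)) ^ 2)

lemma intEucNorm_eq_norm {N : ℕ} (e : Fin N → ℤ) :
    intEucNorm e = ‖WithLp.toLp 2 (fun i => (e i : ℝ))‖ := by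
  simp [intEucNorm, EuclideanSpace.norm_eq, sq_abs]

lemma intEucNorm_nonneg {N : ℕ} (e : Fin N → ℤ) : 0 ≤ intEucNorm e :=
  Real.sqrt_nonneg _

lemma intEucNorm_add_le {N : ℕ} (a b : Fin N → ℤ) :
    intEucNorm (a + b) ≤ intEucNorm a + intEucNorm b := by
  simp only [intEucNorm_eq_norm, Pi.add_apply, Int.cast_add]
  exact norm_add_le (WithLp.toLp 2 fun i => (a i : ℝ)) (WithLp.toLp 2 fun i => (b i : ℝ))

lemma Matrix.mulVec_intCast_add {R m n : Type*} [Ring R] [Fintype n] (A : Matrix m n R)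
    (a b : n → ℤ) :
    A.mulVec (fun i => ((a + b) i : R))
      = A.mulVec (fun i => (a i : R)) + A.mulVec (fun i => (b i : R)) := by
  rw [← Matrix.mulVec_add]
  congr with i
  exact Int.cast_add (a i) (b i)

lemma sum_intCast_mul_smul_add {R M ι : Type*} [Ring R] [AddCommGroup M] [Module R M]
    [Fintype ι] (s a b : ι → ℤ) (α : ι → M) :
    ∑ j, ((s j * a j : ℤ) : R) • α j + ∑ j, ((s j * b j : ℤ) : R) • α j
      = ∑ j, ((s j * (a j + b j) : ℤ) : R) • α j := by
  rw [← Finset.sum_add_distrib]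
  simp only [mul_add, Int.cast_add, add_smul]

lemma two_mul_le_mul_sqrt {k : ℕ} (hk : 0 < k) {V x : ℝ} (hc : 0 ≤ V * √x) :
    2 * (V * √x) ≤ 2 * k * V * √(2 * k * x) := by
  have hk1 : (1 : ℝ) ≤ k := by exact_mod_cast hk
  have hsqrt : 1 ≤ √(2 * k) := Real.one_le_sqrt.mpr (by linarith)
  calc 2 * (V * √x) ≤ (k * √(2 * k)) * (2 * (V * √x)) :=
        le_mul_of_one_le_left (by positivity) (one_le_mul_of_one_le_of_one_le hk1 hsqrt)
    _ = 2 * k * V * √(2 * k * x) := by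
        rw [Real.sqrt_mul (by positivity : (0 : ℝ) ≤ 2 * k) x]
        ring

theorem hrsign_correct_general (q h N k ℓ n : ℕ) (hk : 0 < k) (V : ℝ)
    (A : Matrix (Fin h) (Fin N) (ZMod q)) (α : Fin k → Fin h → ZMod q)
    (τ : Fin k → ℕ) (u v m : Fin k → ℤ) (huv : ∀ j, u j + v j = m j)
    (e_u e_v : Fin N → ℤ)
    (hnu : intEucNorm e_u ≤ V * Real.sqrt ((ℓ : ℝ) * n))
    (hnv : intEucNorm e_v ≤ V * Real.sqrt ((ℓ : ℝ) * n))
    (hAu : A.mulVec (fun i => (e_u i : ZMod q))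
      = ∑ j : Fin k, ((((-1 : ℤ) ^ τ j * u j : ℤ) : ZMod q)) • α j)
    (hAv : A.mulVec (fun i => (e_v i : ZMod q))
      = ∑ j : Fin k, ((((-1 : ℤ) ^ τ j * v j : ℤ) : ZMod q)) • α j) :
    intEucNorm (e_u + e_v) ≤ 2 * k * V * Real.sqrt (2 * k * ℓ * n) ∧
    A.mulVec (fun i => ((e_u + e_v) i : ZMod q))
      = ∑ j : Fin k, ((((-1 : ℤ) ^ τ j * m j : ℤ) : ZMod q)) • α j := by
  constructor
  · calc intEucNorm (e_u + e_v) ≤ intEucNorm e_u + intEucNorm e_v := intEucNorm_add_le _ _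
      _ ≤ 2 * (V * √((ℓ : ℝ) * n)) := by linarith
      _ ≤ 2 * k * V * √(2 * k * ((ℓ : ℝ) * n)) :=
          two_mul_le_mul_sqrt hk ((intEucNorm_nonneg _).trans hnu)
      _ = 2 * k * V * √(2 * k * ℓ * n) := by rw [← mul_assoc]
  · rw [Matrix.mulVec_intCast_add, hAu, hAv, sum_intCast_mul_smul_add]
    simp only [huv]

/-- Deterministic core of the correctness of `HR-Sign`: if `e(u)` and `e(v)` are
short preimages of the syndromes `t(u)` and `t(v)` for a decomposition `m = u + v`,
then `e = e(u) + e(v)` passes both verification conditions for message `m`. -/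
theorem hrsign_correct (q h N k ℓ n : ℕ) (hq : 2 ≤ q) (hh : 0 < h) (hN : 0 < N)
    (hk : 0 < k) (hℓ : 0 < ℓ) (hn : 0 < n) (V : ℝ) (hV : 0 ≤ V)
    (A : Matrix (Fin h) (Fin N) (ZMod q)) (α : Fin k → Fin h → ZMod q)
    (τ : Fin k → ℕ) (u v m : Fin k → ℤ) (huv : ∀ j, u j + v j = m j)
    (e_u e_v : Fin N → ℤ)
    (hnu : intEucNorm e_u ≤ V * Real.sqrt ((ℓ : ℝ) * n))
    (hnv : intEucNorm e_v ≤ V * Real.sqrt ((ℓ : ℝ) * n))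
    (hAu : A.mulVec (fun i => (e_u i : ZMod q))
      = ∑ j : Fin k, ((((-1 : ℤ) ^ τ j * u j : ℤ) : ZMod q)) • α j)
    (hAv : A.mulVec (fun i => (e_v i : ZMod q))
      = ∑ j : Fin k, ((((-1 : ℤ) ^ τ j * v j : ℤ) : ZMod q)) • α j) :
    intEucNorm (e_u + e_v) ≤ 2 * k * V * Real.sqrt (2 * k * ℓ * n) ∧
    A.mulVec (fun i => ((e_u + e_v) i : ZMod q))
      = ∑ j : Fin k, ((((-1 : ℤ) ^ τ j * m j : ℤ) : ZMod q)) • α j :=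
  hrsign_correct_general q h N k ℓ n hk V A α τ u v m huv e_u e_v hnu hnv hAu hAv
end

section
/- Let q ≥ 2 and h, N, k, ℓ, n, p be positive integers with p ≤ k, and let V ≥ 0 be a real number. Let A : Matrix (Fin h) (Fin N) (ZMod q), let α : Fin k → (Fin h → ZMod q), let τ : Fin k → ℕ, and for each j = 1, …, p let c_j ∈ {0, 1} ⊆ ℤ, let m_j : Fin k → ℤ, and let e_j : Fin N → ℤ satisfy ‖e_j‖ ≤ 2V·√(ℓ·n) and A·e_j = Σ_{i=1}^{k} (−1)^{τ i} · (m_j i) · α i (equality in (ZMod q)^h, with integer scalars cast into ZMod q). Then the combined signature e := Σ_{j=1}^{p} c_j · e_j satisfies both verification conditions for the combined message m := Σ_{j=1}^{p} c_j · m_j: namely ‖e‖ ≤ 2kV·√(2kℓn) and A·e = Σ_{i=1}^{k} (−1)^{τ i} · (m i) · α i. -/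
lemma intEucNorm_sum_zsmul_le {ι : Type*} {N : ℕ} (s : Finset ι) (c : ι → ℤ)
    (e : ι → Fin N → ℤ) :
    intEucNorm (∑ j ∈ s, c j • e j) ≤ ∑ j ∈ s, |c j| * intEucNorm (e j) := by
  let toEuc : (Fin N → ℤ) →+ EuclideanSpace ℝ (Fin N) :=
    (WithLp.linearEquiv 2 ℝ (Fin N → ℝ)).symm.toAddMonoidHom.comp
      ((Int.castRingHom ℝ).compLeft (Fin N)).toAddMonoidHom
  have hnorm : ∀ x, intEucNorm x = ‖toEuc x‖ := intEucNorm_eq_norm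
  simp only [hnorm, map_sum, map_zsmul]
  refine (norm_sum_le _ _).trans (Finset.sum_le_sum fun j _ => ?_)
  rw [norm_zsmul ℝ, Real.norm_eq_abs, Int.cast_abs]

def intMulVec {R ι κ : Type*} [CommRing R] [Fintype ι] (A : Matrix κ ι R) :
    (ι → ℤ) →+ (κ → R) :=
  A.mulVecLin.toAddMonoidHom.comp ((Int.castRingHom R).compLeft ι).toAddMonoidHom

def intWeightedSum (R : Type*) {κ M : Type*} [Ring R] [Fintype κ] [AddCommGroup M]
    [Module R M] (w : κ → ℤ) (α : κ → M) : (κ → ℤ) →+ M :=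
  AddMonoidHom.mk' (fun m => ∑ i, ((w i * m i : ℤ) : R) • α i) fun m m' => by
    simp only [Pi.add_apply, mul_add, Int.cast_add, add_smul, Finset.sum_add_distrib]

theorem combine_correct_general (q h N k ℓ n p : ℕ) (hk : 0 < k) (hpk : p ≤ k)
    (V : ℝ) (hV : 0 ≤ V)
    (A : Matrix (Fin h) (Fin N) (ZMod q)) (α : Fin k → Fin h → ZMod q)
    (τ : Fin k → ℕ) (c : Fin p → ℤ) (hc : ∀ j, c j = 0 ∨ c j = 1)
    (m : Fin p → Fin k → ℤ) (e : Fin p → Fin N → ℤ)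
    (hne : ∀ j, intEucNorm (e j) ≤ 2 * V * Real.sqrt ((ℓ : ℝ) * n))
    (hAe : ∀ j, A.mulVec (fun i => (e j i : ZMod q))
      = ∑ i : Fin k, ((((-1 : ℤ) ^ τ i * m j i : ℤ) : ZMod q)) • α i) :
    intEucNorm (∑ j : Fin p, c j • e j) ≤ 2 * k * V * Real.sqrt (2 * k * ℓ * n) ∧
    A.mulVec (fun i => ((∑ j : Fin p, c j • e j) i : ZMod q))
      = ∑ i : Fin k,
          ((((-1 : ℤ) ^ τ i * (∑ j : Fin p, c j • m j) i : ℤ) : ZMod q)) • α i := by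
  refine ⟨?_, ?_⟩
  · have hk_one : (1 : ℝ) ≤ k := by exact_mod_cast hk
    calc intEucNorm (∑ j : Fin p, c j • e j)
        ≤ ∑ j : Fin p, |c j| * intEucNorm (e j) := intEucNorm_sum_zsmul_le _ c e
      _ ≤ ∑ _j : Fin p, 2 * V * Real.sqrt ((ℓ : ℝ) * n) := Finset.sum_le_sum fun j _ => by
          rcases hc j with h0 | h1
          · simp only [h0, abs_zero, Int.cast_zero, zero_mul]; positivity
          · simpa [h1] using hne j
      _ = p * (2 * V * Real.sqrt ((ℓ : ℝ) * n)) := by simp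
      _ ≤ k * (2 * V * Real.sqrt ((ℓ : ℝ) * n)) := by gcongr
      _ ≤ k * (2 * V * Real.sqrt (2 * k * ℓ * n)) := by
          gcongr
          nlinarith [mul_nonneg (Nat.cast_nonneg ℓ) (Nat.cast_nonneg n : (0 : ℝ) ≤ n)]
      _ = 2 * k * V * Real.sqrt (2 * k * ℓ * n) := by ring
  · have hsig : ∀ j,
        intMulVec A (e j) = intWeightedSum (ZMod q) (fun i => (-1) ^ τ i) α (m j) := hAe
    change intMulVec A _ = intWeightedSum (ZMod q) (fun i => (-1) ^ τ i) α _
    simp only [map_sum, map_zsmul, hsig]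

/-- Deterministic core of the homomorphic correctness of `Combine`: given `p ≤ k`
valid signatures `e_j` on messages `m_j` under a common tag `τ` and ring matrix `A`,
the 0/1-combination `∑ j, c j • e j` is a valid signature on `∑ j, c j • m j`. -/
theorem combine_correct (q h N k ℓ n p : ℕ) (hq : 2 ≤ q) (hh : 0 < h) (hN : 0 < N)
    (hk : 0 < k) (hℓ : 0 < ℓ) (hn : 0 < n) (hp : 0 < p) (hpk : p ≤ k)
    (V : ℝ) (hV : 0 ≤ V)
    (A : Matrix (Fin h) (Fin N) (ZMod q)) (α : Fin k → Fin h → ZMod q)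
    (τ : Fin k → ℕ) (c : Fin p → ℤ) (hc : ∀ j, c j = 0 ∨ c j = 1)
    (m : Fin p → Fin k → ℤ) (e : Fin p → Fin N → ℤ)
    (hne : ∀ j, intEucNorm (e j) ≤ 2 * V * Real.sqrt ((ℓ : ℝ) * n))
    (hAe : ∀ j, A.mulVec (fun i => (e j i : ZMod q))
      = ∑ i : Fin k, ((((-1 : ℤ) ^ τ i * m j i : ℤ) : ZMod q)) • α i) :
    intEucNorm (∑ j : Fin p, c j • e j) ≤ 2 * k * V * Real.sqrt (2 * k * ℓ * n) ∧
    A.mulVec (fun i => ((∑ j : Fin p, c j • e j) i : ZMod q))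
      = ∑ i : Fin k,
          ((((-1 : ℤ) ^ τ i * (∑ j : Fin p, c j • m j) i : ℤ) : ZMod q)) • α i :=
  combine_correct_general q h N k ℓ n p hk hpk V hV A α τ c hc m e hne hAe
end
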